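/- Let B₁ = (Q₁, I₁, F₁, δ₁) and B₂ = (Q₂, I₂, F₂, δ₂) be Boolean finite automata over the same alphabet α. Define their intersection B₁ ∩ B₂ = (Q₁ ⊕ Q₂, I, F, δ) where I v := I₁ (v ∘ Sum.inl) ∧ I₂ (v ∘ Sum.inr), F := Sum.elim F₁ F₂, δ (Sum.inl q) a v := δ₁ q a (v ∘ Sum.inl), and δ (Sum.inr q) a v := δ₂ q a (v ∘ Sum.inr). Then for every word w : List α, B₁ ∩ B₂ accepts w if and only if both B₁ and B₂ accept w; that is, L(B₁ ∩ B₂) = L(B₁) ∩ L(B₂). -/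
import Mathlib


/-- A Boolean finite automaton over alphabet `α` with state type `Q`. -/
structure BFA (α : Type*) (Q : Type*) where
  I : (Q → Prop) → Prop
  F : Q → Prop
  δ : Q → α → (Q → Prop) → Prop

/-- A word `w` is accepted by the BFA `B` iff, after substituting transitions for states
symbol by symbol starting from the initial Boolean function, the resulting Boolean function
holds on the final assignment. -/
def BFA.Accepts {α Q : Type*} (B : BFA α Q) (w : List α) : Prop :=
  (List.foldl (fun G a => fun v => G (fun q => B.δ q a v)) B.I w) B.F

/-- The intersection of two BFAs: disjoint union of states, conjunction of initial functions. -/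
def BFA.inter {α Q₁ Q₂ : Type*} (B₁ : BFA α Q₁) (B₂ : BFA α Q₂) : BFA α (Q₁ ⊕ Q₂) :=
  { I := fun v => B₁.I (v ∘ Sum.inl) ∧ B₂.I (v ∘ Sum.inr)
    F := Sum.elim B₁.F B₂.F
    δ := fun q a v =>
      match q with
      | Sum.inl q => B₁.δ q a (v ∘ Sum.inl)
      | Sum.inr q => B₂.δ q a (v ∘ Sum.inr) }

lemma BFA.inter_aux {α Q₁ Q₂ : Type*} (B₁ : BFA α Q₁) (B₂ : BFA α Q₂) (w : List α) :
    ∀ (G₁ : (Q₁ → Prop) → Prop) (G₂ : (Q₂ → Prop) → Prop),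
    (List.foldl (fun G a => fun v => G (fun q => (B₁.inter B₂).δ q a v))
        (fun v => G₁ (v ∘ Sum.inl) ∧ G₂ (v ∘ Sum.inr)) w) (Sum.elim B₁.F B₂.F) ↔
      (List.foldl (fun G a => fun v => G (fun q => B₁.δ q a v)) G₁ w) B₁.F ∧
      (List.foldl (fun G a => fun v => G (fun q => B₂.δ q a v)) G₂ w) B₂.F := by
  induction w with
  | nil => intro G₁ G₂; rfl
  | cons a w ih =>
    intro G₁ G₂
    simp only [List.foldl_cons]
    exact ih (fun v => G₁ (fun q => B₁.δ q a v)) (fun v => G₂ (fun q => B₂.δ q a v))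

/-- The union BFA accepts exactly the words accepted by both constituent BFAs:
`L(B₁ ∩ B₂) = L(B₁) ∩ L(B₂)`. -/
theorem BFA.inter_accepts {α Q₁ Q₂ : Type*} (B₁ : BFA α Q₁) (B₂ : BFA α Q₂) (w : List α) :
    (B₁.inter B₂).Accepts w ↔ B₁.Accepts w ∧ B₂.Accepts w := BFA.inter_aux B₁ B₂ w B₁.I B₂.I
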